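/- Let L be a differential graded Lie algebra and for j,k ≥ 0 with j + k < n define Z_{n,j,k} = ∑_{π ∈ S_{n+1}} (-1)^{ε + |a_{π_1}| + ... + |a_{π_j}|} [...[[...[Da_{π_0}, a_{π_2}],...,a_{π_j}], [...[Da_{π_{j+1}}, a_{π_{j+2}}],...,a_{π_{j+k+1}}]],...,a_{π_n}], for fixed homogeneous elements a_0,...,a_n and D equal to δ on degree 1 and zero elsewhere. Then Z_{n,j,k} = Z_{n,k,j}. -/

import Mathlib

section

open Finset

variable {V : Type*} [AddCommGroup V] [Module ℚ V]

/-- The Koszul sign of a permutation `σ` of `n+1` graded elements with degrees `d`: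
the product over inversions `p < q`, `σ p > σ q` of `(-1)^{|a_{σ p}||a_{σ q}|}`. -/
noncomputable def koszulSgn (n : ℕ) (d : Fin (n + 1) → ℤ)
    (σ : Equiv.Perm (Fin (n + 1))) : ℚ :=
  ∏ pq ∈ Finset.univ.filter
      (fun pq : Fin (n + 1) × Fin (n + 1) => pq.1 < pq.2 ∧ σ pq.2 < σ pq.1),
    (-1 : ℚ) ^ (d (σ pq.1) * d (σ pq.2))

/-- The iterated left bracket `[…[[x, g lo], g (lo+1)], …, g (lo+len-1)]`. -/
def iterBr (br : V →ₗ[ℚ] V →ₗ[ℚ] V) (x : V) (g : ℕ → V) (lo len : ℕ) : V :=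
  ((List.range' lo len).map g).foldl (fun y z => br y z) x

open Fin.NatCast in
/-- Getzler's expression `Z_{n,j,k}`: the sum over `π ∈ S_{n+1}` with Koszul signs and
the extra sign `(-1)^{|a_{π_1}|+⋯+|a_{π_j}|}` of the iterated bracket
`[…[[…[Da_{π_0},a_{π_1}],…,a_{π_j}], […[Da_{π_{j+1}},a_{π_{j+2}}],…,a_{π_{j+k+1}}]],…,a_{π_n}]`,
where `D` is `δ` in degree `1` and `0` elsewhere. -/
noncomputable def Zval (br : V →ₗ[ℚ] V →ₗ[ℚ] V) (δ : V →ₗ[ℚ] V)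
    (n : ℕ) (d : Fin (n + 1) → ℤ) (a : Fin (n + 1) → V) (j k : ℕ) : V :=
  ∑ σ : Equiv.Perm (Fin (n + 1)),
    (koszulSgn n d σ *
        (-1 : ℚ) ^ (∑ m ∈ Finset.Icc 1 j, d (σ (m : Fin (n + 1))))) •
      iterBr br
        (br (iterBr br (if d (σ 0) = 1 then δ (a (σ 0)) else 0)
                (fun m => a (σ (m : Fin (n + 1)))) 1 j)
            (iterBr br
              (if d (σ ((j + 1 : ℕ) : Fin (n + 1))) = 1
                then δ (a (σ ((j + 1 : ℕ) : Fin (n + 1)))) else 0)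
              (fun m => a (σ (m : Fin (n + 1)))) (j + 2) k))
        (fun m => a (σ (m : Fin (n + 1)))) (j + k + 2) (n - (j + k + 1))

/-!
Reindex the sum over `π` by precomposing with the permutation `τ` that exchanges the blocks
`{0, …, j}` and `{j+1, …, j+k+1}`. This exchanges the two inner brackets `X` and `Y`, and
graded antisymmetry gives `[Y, X] = -(-1)^{|X||Y|} [X, Y]`. Koszul signs form a cocycle,
`ε(πτ) = ε(π) · ε_π(τ)`, where `ε_π(τ)` is computed with the degrees `|a_{π_i}|`, and moving one
block past the other gives `ε_π(τ) = (-1)^{(1+|X|)(1+|Y|)}`: a nonzero term has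
`|a_{π_0}| = |a_{π_{j+1}}| = 1` while `D` lowers the degree by one. Together with the extra signs
`(-1)^{|X|}` and `(-1)^{|Y|}` everything cancels. If `D a_{π_0}` or `D a_{π_{j+1}}` vanishes
because of its degree, both terms are zero.
-/
open Fin.NatCast

lemma neg_one_zpow_eq_of_even_sub {K : Type*} [DivisionRing K] {m m' : ℤ} (h : Even (m - m')) :
    (-1 : K) ^ m = (-1) ^ m' := by
  rw [← sub_add_cancel m m', zpow_add₀ (neg_ne_zero.2 one_ne_zero), h.neg_one_zpow, one_mul]

lemma prod_neg_one_zpow_eq_zpow_sum {K ι : Type*} [Field K] (s : Finset ι) (f : ι → ℤ) :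
    ∏ i ∈ s, (-1 : K) ^ f i = (-1) ^ ∑ i ∈ s, f i := by
  induction s using Finset.cons_induction with
  | empty => simp
  | cons i s his ih =>
    rw [prod_cons, sum_cons, zpow_add₀ (neg_ne_zero.2 one_ne_zero), ih]

lemma prod_filter_lt_comp_perm {α M : Type*} [LinearOrder α] [Fintype α] [CommMonoid M]
    (g : α → α → M) (hg : ∀ x y, g x y = g y x) (τ : Equiv.Perm α) :
    ∏ pq ∈ univ.filter (fun pq : α × α => pq.1 < pq.2), g (τ pq.1) (τ pq.2) =
      ∏ pq ∈ univ.filter (fun pq : α × α => pq.1 < pq.2), g pq.1 pq.2 := by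
  refine prod_nbij' (fun pq => (min (τ pq.1) (τ pq.2), max (τ pq.1) (τ pq.2)))
    (fun pq => (min (τ⁻¹ pq.1) (τ⁻¹ pq.2), max (τ⁻¹ pq.1) (τ⁻¹ pq.2))) ?_ ?_ ?_ ?_ ?_
  all_goals intro pq h; simp only [mem_filter_univ] at h ⊢
  · exact min_lt_max.2 (τ.injective.ne (ne_of_lt h))
  · exact min_lt_max.2 (τ⁻¹.injective.ne (ne_of_lt h))
  · rcases le_total (τ pq.1) (τ pq.2) with h' | h' <;> simp [h', le_of_lt h]
  · rcases le_total (τ⁻¹ pq.1) (τ⁻¹ pq.2) with h' | h' <;> simp_all [le_of_lt h]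
  · rcases le_total (τ pq.1) (τ pq.2) with h' | h' <;> simp [h', hg]

section Koszul

variable {n : ℕ}

/-- Unlike the inversion condition in `koszulSgn`, the condition here is symmetric in `x` and `y`,
so that pairs can be reindexed by a permutation (`prod_filter_lt_comp_perm`). -/
def koszulFactor (d : Fin (n + 1) → ℤ) (σ : Equiv.Perm (Fin (n + 1))) (x y : Fin (n + 1)) : ℚ :=
  if Xor (x < y) (σ x < σ y) then (-1) ^ (d (σ x) * d (σ y)) else 1

lemma koszulFactor_comm (d : Fin (n + 1) → ℤ) (σ : Equiv.Perm (Fin (n + 1))) (x y : Fin (n + 1)) :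
    koszulFactor d σ x y = koszulFactor d σ y x := by
  rcases lt_trichotomy x y with h | rfl | h
  · have : σ x ≠ σ y := σ.injective.ne (ne_of_lt h)
    simp [koszulFactor, Xor, h, not_lt_of_gt h, this.symm.le_iff_lt, mul_comm (d (σ x))]
  · rfl
  · have : σ y ≠ σ x := σ.injective.ne (ne_of_lt h)
    simp [koszulFactor, Xor, h, not_lt_of_gt h, this.symm.le_iff_lt, mul_comm (d (σ x))]

lemma koszulSgn_eq_prod_koszulFactor (d : Fin (n + 1) → ℤ) (σ : Equiv.Perm (Fin (n + 1))) :
    koszulSgn n d σ =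
      ∏ pq ∈ univ.filter (fun pq : Fin (n + 1) × Fin (n + 1) => pq.1 < pq.2),
        koszulFactor d σ pq.1 pq.2 := by
  rw [koszulSgn, ← filter_filter, prod_filter]
  refine prod_congr rfl fun pq h => ?_
  rw [mem_filter_univ] at h
  have : σ pq.1 ≠ σ pq.2 := σ.injective.ne (ne_of_lt h)
  simp [koszulFactor, Xor, h, this.symm.le_iff_lt]

lemma koszulFactor_mul (d : Fin (n + 1) → ℤ) (σ τ : Equiv.Perm (Fin (n + 1))) (x y : Fin (n + 1)) :
    koszulFactor d (σ * τ) x y =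
      koszulFactor (fun p => d (σ p)) τ x y * koszulFactor d σ (τ x) (τ y) := by
  have hsq : (-1 : ℚ) ^ (d (σ (τ x)) * d (σ (τ y))) * (-1) ^ (d (σ (τ x)) * d (σ (τ y))) = 1 := by
    rw [← mul_zpow, neg_one_mul, neg_neg, one_zpow]
  unfold koszulFactor
  simp only [Equiv.Perm.mul_apply]
  by_cases hP : x < y <;> by_cases hQ : τ x < τ y <;> by_cases hR : σ (τ x) < σ (τ y) <;>
    simp [Xor, hP, hQ, hR, hsq]

lemma koszulSgn_mul (d : Fin (n + 1) → ℤ) (σ τ : Equiv.Perm (Fin (n + 1))) :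
    koszulSgn n d (σ * τ) = koszulSgn n d σ * koszulSgn n (fun p => d (σ p)) τ := by
  simp only [koszulSgn_eq_prod_koszulFactor, koszulFactor_mul, prod_mul_distrib,
    prod_filter_lt_comp_perm _ (koszulFactor_comm d σ), mul_comm]

end Koszul

lemma sum_filter_val_mem {M : Type*} [AddCommMonoid M] {n : ℕ} (s : Finset ℕ)
    (hs : ∀ m ∈ s, m < n + 1) (f : Fin (n + 1) → M) :
    ∑ p ∈ univ.filter (fun p : Fin (n + 1) => p.val ∈ s), f p = ∑ m ∈ s, f m := by
  have hinj : Set.InjOn (Nat.cast : ℕ → Fin (n + 1)) s := fun m hm m' hm' h => by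
    rw [← Fin.val_cast_of_lt (hs m hm), ← Fin.val_cast_of_lt (hs m' hm'), h]
  rw [← sum_image (f := f) hinj]
  congr 1
  ext p
  simp only [mem_filter_univ, mem_image]
  constructor
  · exact fun hp => ⟨p.val, hp, Fin.cast_val_eq_self p⟩
  · rintro ⟨m, hm, rfl⟩
    rwa [Fin.val_cast_of_lt (hs m hm)]

lemma sum_Icc_one_eq_sum_range {M : Type*} [AddCommMonoid M] (f : ℕ → M) (j : ℕ) :
    ∑ m ∈ Icc 1 j, f m = ∑ t ∈ range j, f (1 + t) := by
  rw [← Ico_add_one_right_eq_Icc, sum_Ico_eq_sum_range, Nat.add_sub_cancel]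

section BlockSwap

def swapFun (j k m : ℕ) : ℕ :=
  if m ≤ k then j + 1 + m else if m ≤ j + k + 1 then m - (k + 1) else m

variable {j k m : ℕ}

lemma swapFun_of_le (hm : m ≤ k) : swapFun j k m = j + 1 + m := by
  simp [swapFun, hm]

lemma swapFun_of_lt_of_le (h₁ : k < m) (h₂ : m ≤ j + k + 1) : swapFun j k m = m - (k + 1) := by
  simp [swapFun, h₂, not_le.2 h₁]

lemma swapFun_of_lt (h : j + k + 1 < m) : swapFun j k m = m := by
  simp [swapFun, not_le.2 h, show ¬m ≤ k by omega]

lemma swapFun_swapFun (j k m : ℕ) : swapFun k j (swapFun j k m) = m := by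
  unfold swapFun; split_ifs <;> omega

lemma swapFun_lt {n : ℕ} (h : j + k + 1 ≤ n) (hm : m < n + 1) : swapFun j k m < n + 1 := by
  unfold swapFun; split_ifs <;> omega

def blockSwap (n j k : ℕ) (h : j + k + 1 ≤ n) : Equiv.Perm (Fin (n + 1)) where
  toFun p := ⟨swapFun j k p, swapFun_lt h p.isLt⟩
  invFun p := ⟨swapFun k j p, swapFun_lt (by omega) p.isLt⟩
  left_inv p := Fin.ext (swapFun_swapFun j k p)
  right_inv p := Fin.ext (swapFun_swapFun k j p)

lemma blockSwap_natCast {n : ℕ} (h : j + k + 1 ≤ n) (hm : m ≤ n) :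
    blockSwap n j k h m = (swapFun j k m : Fin (n + 1)) := by
  ext
  simp [blockSwap, Fin.val_cast_of_lt (Nat.lt_succ_of_le hm),
    Fin.val_cast_of_lt (swapFun_lt h (Nat.lt_succ_of_le hm))]

lemma koszulSgn_blockSwap {n : ℕ} (e : Fin (n + 1) → ℤ) (h : j + k + 1 ≤ n) :
    koszulSgn n e (blockSwap n j k h) =
      (-1) ^ ((∑ i ∈ range (k + 1), e (j + 1 + i : ℕ)) * ∑ i ∈ range (j + 1), e i) := by
  set τ := blockSwap n j k h
  have hinv : univ.filter (fun pq : Fin (n + 1) × Fin (n + 1) => pq.1 < pq.2 ∧ τ pq.2 < τ pq.1) =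
      univ.filter (fun p : Fin (n + 1) => p.val ∈ range (k + 1)) ×ˢ
        univ.filter (fun q : Fin (n + 1) => q.val ∈ Ico (k + 1) (j + k + 2)) := by
    ext ⟨p, q⟩
    simp only [mem_filter_univ, mem_product, mem_range, mem_Ico, Fin.lt_def]
    change _ ∧ swapFun j k q < swapFun j k p ↔ _
    have := q.isLt
    unfold swapFun; split_ifs <;> omega
  have hA : ∑ p ∈ univ.filter (fun p : Fin (n + 1) => p.val ∈ range (k + 1)), e (τ p) =
      ∑ i ∈ range (k + 1), e (j + 1 + i : ℕ) := by
    rw [sum_filter_val_mem _ (fun m hm => by simp at hm; omega)]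
    refine sum_congr rfl fun m hm => ?_
    rw [mem_range] at hm
    rw [blockSwap_natCast h (by omega), swapFun_of_le (by omega)]
  have hB : ∑ q ∈ univ.filter (fun q : Fin (n + 1) => q.val ∈ Ico (k + 1) (j + k + 2)), e (τ q) =
      ∑ i ∈ range (j + 1), e i := by
    rw [sum_filter_val_mem _ (fun m hm => by simp at hm; omega), sum_Ico_eq_sum_range,
      show j + k + 2 - (k + 1) = j + 1 by omega]
    refine sum_congr rfl fun m hm => ?_
    rw [mem_range] at hm
    rw [blockSwap_natCast h (by omega), swapFun_of_lt_of_le (by omega) (by omega),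
      Nat.add_sub_cancel_left]
  rw [koszulSgn, hinv, prod_neg_one_zpow_eq_zpow_sum, sum_product, ← hA, ← hB, sum_mul_sum]

end BlockSwap

section IterBr

variable (br : V →ₗ[ℚ] V →ₗ[ℚ] V)

lemma iterBr_succ (w : V) (g : ℕ → V) (lo len : ℕ) :
    iterBr br w g lo (len + 1) = iterBr br (br w (g lo)) g (lo + 1) len := by
  rw [iterBr, iterBr, List.range'_succ, List.map_cons, List.foldl_cons]

lemma iterBr_smul (c : ℚ) (w : V) (g : ℕ → V) (lo len : ℕ) :
    iterBr br (c • w) g lo len = c • iterBr br w g lo len := by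
  induction len generalizing lo w with
  | zero => rfl
  | succ len ih => rw [iterBr_succ, iterBr_succ, map_smul, LinearMap.smul_apply, ih]

lemma iterBr_zero (g : ℕ → V) (lo len : ℕ) : iterBr br 0 g lo len = 0 := by
  simpa using iterBr_smul br 0 0 g lo len

lemma iterBr_congr_shift {f g : ℕ → V} {lo lo' len : ℕ} (h : ∀ i < len, f (lo + i) = g (lo' + i))
    (w : V) : iterBr br w f lo len = iterBr br w g lo' len := by
  unfold iterBr
  congr 1
  refine List.ext_getElem (by simp) fun i h₁ _ => ?_
  simp only [List.getElem_map, List.getElem_range', one_mul]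
  exact h i (by simpa using h₁)

lemma iterBr_mem (H : ℤ → Submodule ℚ V)
    (hbr_mem : ∀ {i j : ℤ} {a b : V}, a ∈ H i → b ∈ H j → br a b ∈ H (i + j))
    {g : ℕ → V} {e : ℕ → ℤ} (hg : ∀ m, g m ∈ H (e m)) {w : V} {i : ℤ} (hw : w ∈ H i)
    (lo len : ℕ) : iterBr br w g lo len ∈ H (i + ∑ t ∈ range len, e (lo + t)) := by
  induction len generalizing lo w i with
  | zero => simpa [iterBr] using hw
  | succ len ih =>
    rw [iterBr_succ, sum_range_succ', add_zero, add_comm _ (e lo), ← add_assoc]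
    convert ih (hbr_mem hw (hg lo)) (lo + 1) using 5
    omega

end IterBr

section Summand

variable (br : V →ₗ[ℚ] V →ₗ[ℚ] V) (δ : V →ₗ[ℚ] V)

def zSummand (n j k : ℕ) (e : ℕ → ℤ) (x : ℕ → V) : V :=
  iterBr br
    (br (iterBr br (if e 0 = 1 then δ (x 0) else 0) x 1 j)
      (iterBr br (if e (j + 1) = 1 then δ (x (j + 1)) else 0) x (j + 2) k))
    x (j + k + 2) (n - (j + k + 1))

lemma Zval_eq_sum (n : ℕ) (d : Fin (n + 1) → ℤ) (a : Fin (n + 1) → V) (j k : ℕ) :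
    Zval br δ n d a j k = ∑ σ : Equiv.Perm (Fin (n + 1)),
      (koszulSgn n d σ * (-1 : ℚ) ^ (∑ m ∈ Icc 1 j, d (σ m))) •
        zSummand br δ n j k (fun m => d (σ m)) (fun m => a (σ m)) := rfl

variable {br δ} {n j k : ℕ} {e : ℕ → ℤ} {x : ℕ → V}

lemma zSummand_eq_zero_of_left (h : e 0 ≠ 1) : zSummand br δ n j k e x = 0 := by
  simp [zSummand, h, iterBr_zero]

lemma zSummand_eq_zero_of_right (h : e (j + 1) ≠ 1) : zSummand br δ n j k e x = 0 := by
  simp [zSummand, h, iterBr_zero]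

lemma zSummand_swap (H : ℤ → Submodule ℚ V)
    (hbr_mem : ∀ {i j : ℤ} {a b : V}, a ∈ H i → b ∈ H j → br a b ∈ H (i + j))
    (hδ_mem : ∀ {i : ℤ} {a : V}, a ∈ H i → δ a ∈ H (i - 1))
    (hanti : ∀ {i j : ℤ} {a b : V}, a ∈ H i → b ∈ H j →
      br a b = -((-1 : ℚ) ^ (i * j) • br b a))
    (hjk : j + k + 1 ≤ n) {e' : ℕ → ℤ} {x' : ℕ → V} (hx : ∀ m, x m ∈ H (e m))
    (he' : ∀ m ≤ n, e' m = e (swapFun j k m)) (hx' : ∀ m ≤ n, x' m = x (swapFun j k m))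
    (h₀ : e 0 = 1) (h₁ : e (j + 1) = 1) :
    zSummand br δ n k j e' x' =
      -((-1 : ℚ) ^ ((∑ t ∈ range k, e (j + 2 + t)) * ∑ t ∈ range j, e (1 + t))) •
        zSummand br δ n j k e x := by
  have hX : iterBr br (δ (x 0)) x 1 j ∈ H (∑ t ∈ range j, e (1 + t)) := by
    simpa [h₀] using iterBr_mem br H hbr_mem hx (hδ_mem (hx 0)) 1 j
  have hY : iterBr br (δ (x (j + 1))) x (j + 2) k ∈ H (∑ t ∈ range k, e (j + 2 + t)) := by
    simpa [h₁] using iterBr_mem br H hbr_mem hx (hδ_mem (hx (j + 1))) (j + 2) k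
  have hleft : ∀ w, iterBr br w x' 1 k = iterBr br w x (j + 2) k :=
    iterBr_congr_shift br fun i hi => by
      rw [hx' _ (by omega), swapFun_of_le (by omega)]; congr 1; omega
  have hright : ∀ w, iterBr br w x' (k + 2) j = iterBr br w x 1 j :=
    iterBr_congr_shift br fun i hi => by
      rw [hx' _ (by omega), swapFun_of_lt_of_le (by omega) (by omega)]; congr 1; omega
  have htail : ∀ w, iterBr br w x' (j + k + 2) (n - (j + k + 1)) =
      iterBr br w x (j + k + 2) (n - (j + k + 1)) :=
    iterBr_congr_shift br fun i hi => by
      rw [hx' _ (by omega), swapFun_of_lt (by omega)]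
  have hfirst : swapFun j k 0 = j + 1 := swapFun_of_le (Nat.zero_le k)
  have hsecond : swapFun j k (k + 1) = 0 := by
    rw [swapFun_of_lt_of_le (by omega) (by omega), Nat.sub_self]
  unfold zSummand
  rw [add_comm k j, he' 0 (by omega), he' (k + 1) (by omega), hx' 0 (by omega),
    hx' (k + 1) (by omega), hfirst, hsecond, h₀, h₁, if_pos rfl, if_pos rfl, hleft, hright, htail,
    hanti hY hX, ← neg_smul, iterBr_smul]

end Summand

lemma signed_zSummand_mul_blockSwap (br : V →ₗ[ℚ] V →ₗ[ℚ] V) (δ : V →ₗ[ℚ] V)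
    (H : ℤ → Submodule ℚ V)
    (hbr_mem : ∀ {i j : ℤ} {a b : V}, a ∈ H i → b ∈ H j → br a b ∈ H (i + j))
    (hδ_mem : ∀ {i : ℤ} {a : V}, a ∈ H i → δ a ∈ H (i - 1))
    (hanti : ∀ {i j : ℤ} {a b : V}, a ∈ H i → b ∈ H j →
      br a b = -((-1 : ℚ) ^ (i * j) • br b a))
    {n : ℕ} (d : Fin (n + 1) → ℤ) (a : Fin (n + 1) → V) (ha : ∀ p, a p ∈ H (d p))
    {j k : ℕ} (h : j + k + 1 ≤ n) (σ : Equiv.Perm (Fin (n + 1))) :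
    (koszulSgn n d σ * (-1 : ℚ) ^ (∑ m ∈ Icc 1 j, d (σ m))) •
        zSummand br δ n j k (fun m => d (σ m)) (fun m => a (σ m)) =
      (koszulSgn n d (σ * blockSwap n j k h) *
          (-1 : ℚ) ^ (∑ m ∈ Icc 1 k, d ((σ * blockSwap n j k h) m))) •
        zSummand br δ n k j (fun m => d ((σ * blockSwap n j k h) m))
          (fun m => a ((σ * blockSwap n j k h) m)) := by
  set τ := blockSwap n j k h
  set e : ℕ → ℤ := fun m => d (σ m)
  have hτ : ∀ m ≤ n, (σ * τ) (m : Fin (n + 1)) = σ (swapFun j k m) :=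
    fun m hm => congrArg σ (blockSwap_natCast h hm)
  have he' : ∀ m ≤ n, d ((σ * τ) m) = e (swapFun j k m) := fun m hm => by rw [hτ m hm]
  by_cases h₀ : e 0 = 1
  swap
  · rw [zSummand_eq_zero_of_left h₀, zSummand_eq_zero_of_right (by
      rwa [he' _ (by omega), swapFun_of_lt_of_le (by omega) (by omega), Nat.sub_self]),
      smul_zero, smul_zero]
  by_cases h₁ : e (j + 1) = 1
  swap
  · rw [zSummand_eq_zero_of_right h₁, zSummand_eq_zero_of_left (by
      rwa [he' 0 (by omega), swapFun_of_le (Nat.zero_le _)]), smul_zero, smul_zero]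
  rw [zSummand_swap H hbr_mem hδ_mem hanti h (fun m => ha (σ m)) he'
    (fun m hm => by rw [hτ m hm]) h₀ h₁, smul_smul]
  congr 1
  set SX := ∑ t ∈ range j, e (1 + t)
  set SY := ∑ t ∈ range k, e (j + 2 + t)
  have hSX : ∑ m ∈ Icc 1 j, d (σ m) = SX := sum_Icc_one_eq_sum_range _ _
  have hSY : ∑ m ∈ Icc 1 k, d ((σ * τ) m) = SY := by
    rw [sum_Icc_one_eq_sum_range]
    refine sum_congr rfl fun t ht => ?_
    rw [mem_range] at ht
    rw [he' _ (by omega), swapFun_of_le (by omega)]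
    congr 1; omega
  have hA : ∑ i ∈ range (k + 1), d (σ ↑(j + 1 + i)) = 1 + SY := by
    rw [sum_range_succ', add_comm, add_zero]
    exact congrArg₂ (· + ·) h₁
      (sum_congr rfl fun i _ => by rw [show j + 1 + (i + 1) = j + 2 + i by omega])
  have hB : ∑ i ∈ range (j + 1), d (σ ↑i) = 1 + SX := by
    rw [sum_range_succ', add_comm]
    exact congrArg₂ (· + ·) h₀ (sum_congr rfl fun i _ => by rw [add_comm i 1])
  rw [koszulSgn_mul, koszulSgn_blockSwap, hA, hB, hSX, hSY, mul_assoc, mul_assoc]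
  congr 1
  rw [neg_one_zpow_eq_of_even_sub (m' := (1 + SY) * (1 + SX) + SY + SY * SX + 1)
    ⟨-1 - SY - SY * SX, by ring⟩]
  simp only [zpow_add₀ (by norm_num : (-1 : ℚ) ≠ 0), zpow_one]
  ring

theorem stmt_13_general (V : Type*) [AddCommGroup V] [Module ℚ V]
    (H : ℤ → Submodule ℚ V)
    (br : V →ₗ[ℚ] V →ₗ[ℚ] V) (δ : V →ₗ[ℚ] V)
    (hbr_mem : ∀ {i j : ℤ} {a b : V}, a ∈ H i → b ∈ H j → br a b ∈ H (i + j))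
    (hδ_mem : ∀ {i : ℤ} {a : V}, a ∈ H i → δ a ∈ H (i - 1))
    (hanti : ∀ {i j : ℤ} {a b : V}, a ∈ H i → b ∈ H j →
      br a b = -((-1 : ℚ) ^ (i * j) • br b a))
    (n : ℕ) (d : Fin (n + 1) → ℤ) (a : Fin (n + 1) → V)
    (ha : ∀ p, a p ∈ H (d p))
    (j k : ℕ) (hjk : j + k < n) :
    Zval br δ n d a j k = Zval br δ n d a k j := by
  rw [Zval_eq_sum, Zval_eq_sum]
  exact Fintype.sum_equiv (Equiv.mulRight (blockSwap n j k hjk)) _ _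
    (signed_zSummand_mul_blockSwap br δ H hbr_mem hδ_mem hanti d a ha hjk)

/-- Getzler's Lemma 2, first part: `Z_{n,j,k} = Z_{n,k,j}` for `j + k < n`, in any
differential graded Lie algebra over `ℚ` with homogeneous elements
`a_0, …, a_n` of degrees `d_0, …, d_n`. -/
theorem stmt_13 (V : Type*) [AddCommGroup V] [Module ℚ V]
    (H : ℤ → Submodule ℚ V)
    (br : V →ₗ[ℚ] V →ₗ[ℚ] V) (δ : V →ₗ[ℚ] V)
    (hbr_mem : ∀ {i j : ℤ} {a b : V}, a ∈ H i → b ∈ H j → br a b ∈ H (i + j))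
    (hδ_mem : ∀ {i : ℤ} {a : V}, a ∈ H i → δ a ∈ H (i - 1))
    (hδδ : ∀ a : V, δ (δ a) = 0)
    (hanti : ∀ {i j : ℤ} {a b : V}, a ∈ H i → b ∈ H j →
      br a b = -((-1 : ℚ) ^ (i * j) • br b a))
    (hjac : ∀ {i j : ℤ} {a b : V}, a ∈ H i → b ∈ H j → ∀ c : V,
      br a (br b c) = br (br a b) c + (-1 : ℚ) ^ (i * j) • br b (br a c))
    (hleib : ∀ {i : ℤ} {a : V}, a ∈ H i → ∀ b : V,
      δ (br a b) = br (δ a) b + (-1 : ℚ) ^ i • br a (δ b))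
    (n : ℕ) (d : Fin (n + 1) → ℤ) (a : Fin (n + 1) → V)
    (ha : ∀ p, a p ∈ H (d p))
    (j k : ℕ) (hjk : j + k < n) :
    Zval br δ n d a j k = Zval br δ n d a k j :=
  stmt_13_general V H br δ hbr_mem hδ_mem hanti n d a ha j k hjk

end
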